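/- Let H be a complex Hilbert space of dimension at least 2 (possibly infinite). Then there is no point in L(H): no nonempty subset 𝔭 ⊆ L(H) satisfies all of (1) 0 ∉ 𝔭; (2) U, V ∈ 𝔭 implies U ∩ V ∈ 𝔭; (3) U ∈ 𝔭 and U ⊆ W ∈ L(H) imply W ∈ 𝔭; (4) whenever a family (U_i)_{i∈I} in L(H) has join ⋁_i U_i (the closed linear span of the union) belonging to 𝔭, then U_i ∈ 𝔭 for at least one i ∈ I. -/
import Mathlib


/-- The lattice `L(H)` of closed subspaces of the Hilbert space `H`,
ordered by inclusion. -/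
abbrev ClosedSub (H : Type*) [NormedAddCommGroup H] [InnerProductSpace ℂ H] : Type _ :=
  {U : Submodule ℂ H // IsClosed (U : Set H)}

variable {H : Type*} [NormedAddCommGroup H] [InnerProductSpace ℂ H]

instance : Bot (ClosedSub H) :=
  ⟨⟨⊥, by rw [Submodule.bot_coe]; exact isClosed_singleton⟩⟩

/-- The meet of two closed subspaces is their intersection. -/
instance : Min (ClosedSub H) := ⟨fun U V => ⟨U.1 ⊓ V.1, U.2.inter V.2⟩⟩

/-- The join of a set of closed subspaces: the closed linear span of their union. -/
noncomputable def ClosedSub.setSup (A : Set (ClosedSub H)) : ClosedSub H :=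
  ⟨(sSup (Subtype.val '' A)).topologicalClosure, Submodule.isClosed_topologicalClosure _⟩

lemma aux_span_inf {x y : H} (hy : y ∉ Submodule.span ℂ {x}) :
    Submodule.span ℂ {x} ⊓ Submodule.span ℂ {y} = ⊥ := by
  rw [eq_bot_iff]
  intro z hz
  rw [Submodule.mem_inf] at hz
  obtain ⟨hz1, hz2⟩ := hz
  rw [Submodule.mem_span_singleton] at hz1 hz2
  obtain ⟨a, ha⟩ := hz1
  obtain ⟨b, hb⟩ := hz2
  rcases eq_or_ne b 0 with hb0 | hb0
  · simp [← hb, hb0]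
  · exfalso
    apply hy
    rw [Submodule.mem_span_singleton]
    exact ⟨b⁻¹ * a, by rw [mul_smul, ha, ← hb, inv_smul_smul₀ hb0]⟩

set_option maxHeartbeats 1000000 in
/-- If `dim H ≥ 2` then there is no point in the lattice `L(H)`. -/
theorem no_points_in_quantum_lattice
    {H : Type*} [NormedAddCommGroup H] [InnerProductSpace ℂ H] [CompleteSpace H]
    (hdim : 2 ≤ Module.rank ℂ H) :
    ¬ ∃ 𝔭 : Set (ClosedSub H), 𝔭.Nonempty ∧
      (⊥ : ClosedSub H) ∉ 𝔭 ∧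
      (∀ U ∈ 𝔭, ∀ V ∈ 𝔭, U ⊓ V ∈ 𝔭) ∧
      (∀ U ∈ 𝔭, ∀ W : ClosedSub H, U ≤ W → W ∈ 𝔭) ∧
      (∀ A : Set (ClosedSub H), ClosedSub.setSup A ∈ 𝔭 → ∃ U ∈ A, U ∈ 𝔭) := by
  rintro ⟨𝔭, ⟨U₀, hU₀⟩, hbot, hinf, hup, hsup⟩
  classical
  -- closed subspace spanned by one vector
  have hclosed : ∀ v : H, IsClosed ((Submodule.span ℂ {v} : Submodule ℂ H) : Set H) := by
    intro v
    exact Submodule.closed_of_finiteDimensional _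
  set line : H → ClosedSub H := fun v => ⟨Submodule.span ℂ {v}, hclosed v⟩ with hline
  -- the top element is in 𝔭
  have htopmem : (⟨⊤, isClosed_univ⟩ : ClosedSub H) ∈ 𝔭 :=
    hup U₀ hU₀ _ (by show U₀.1 ≤ ⊤; exact le_top)
  -- the set of all lines
  set A₀ : Set (ClosedSub H) := {U | ∃ v : H, U = line v} with hA₀
  have hsup₀ : ClosedSub.setSup A₀ = (⟨⊤, isClosed_univ⟩ : ClosedSub H) := by
    apply Subtype.ext
    show (sSup (Subtype.val '' A₀)).topologicalClosure = ⊤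
    have : sSup (Subtype.val '' A₀) = (⊤ : Submodule ℂ H) := by
      rw [eq_top_iff]
      intro w _
      have hw : w ∈ (line w).1 := Submodule.mem_span_singleton_self w
      have hle : (line w).1 ≤ sSup (Subtype.val '' A₀) :=
        le_sSup ⟨line w, ⟨w, rfl⟩, rfl⟩
      exact hle hw
    rw [this]
    exact Submodule.topologicalClosure_eq_top_iff.mpr (by simp)
  obtain ⟨U, hUA, hU𝔭⟩ := hsup (A₀) (hsup₀ ▸ htopmem)
  obtain ⟨x, rfl⟩ := hUA
  -- x ≠ 0
  have hx0 : x ≠ 0 := by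
    rintro rfl
    apply hbot
    have : line (0 : H) = (⊥ : ClosedSub H) := by
      apply Subtype.ext
      show Submodule.span ℂ {(0:H)} = (⊥ : Submodule ℂ H)
      simp
    rwa [this] at hU𝔭
  -- find y not in span x
  have hy : ∃ y : H, y ∉ Submodule.span ℂ {x} := by
    by_contra h
    push_neg at h
    have htop : (Submodule.span ℂ {x} : Submodule ℂ H) = ⊤ := by
      rw [eq_top_iff]; intro w _; exact h w
    have h1 : Module.rank ℂ (Submodule.span ℂ ({x} : Set H)) ≤ 1 := by
      simpa using rank_span_le (R := ℂ) ({x} : Set H)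
    rw [htop, rank_top] at h1
    exact absurd (le_trans hdim h1) (by norm_num)
  obtain ⟨y, hy⟩ := hy
  -- the two-element family {line y, line (x+y)}
  have hxy : x + y ∉ Submodule.span ℂ {x} := by
    intro h
    apply hy
    have : x + y - x ∈ Submodule.span ℂ {x} :=
      Submodule.sub_mem _ h (Submodule.mem_span_singleton_self x)
    simpa using this
  set A₁ : Set (ClosedSub H) := {line y, line (x + y)} with hA₁
  have hlemem : line x ≤ ClosedSub.setSup A₁ := by
    show (line x).1 ≤ (ClosedSub.setSup A₁).1
    have h1 : (line y).1 ∈ Subtype.val '' A₁ :=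
      ⟨line y, by left; rfl, rfl⟩
    have h2 : (line (x + y)).1 ∈ Subtype.val '' A₁ :=
      ⟨line (x + y), by right; rfl, rfl⟩
    have hyle : (line y).1 ≤ (ClosedSub.setSup A₁).1 :=
      le_trans (le_sSup h1) (Submodule.le_topologicalClosure _)
    have hxyle : (line (x + y)).1 ≤ (ClosedSub.setSup A₁).1 :=
      le_trans (le_sSup h2) (Submodule.le_topologicalClosure _)
    rw [Submodule.span_singleton_le_iff_mem]
    have hmy : y ∈ (ClosedSub.setSup A₁).1 := hyle (Submodule.mem_span_singleton_self y)
    have hmxy : x + y ∈ (ClosedSub.setSup A₁).1 :=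
      hxyle (Submodule.mem_span_singleton_self (x + y))
    simpa using Submodule.sub_mem _ hmxy hmy
  have hA₁mem : ClosedSub.setSup A₁ ∈ 𝔭 := hup _ hU𝔭 _ hlemem
  obtain ⟨V, hVA, hV𝔭⟩ := hsup A₁ hA₁mem
  have hbot' : (⊥ : ClosedSub H) ∈ 𝔭 := by
    rcases hVA with rfl | rfl
    · have := hinf _ hU𝔭 _ hV𝔭
      have heq : line x ⊓ line y = (⊥ : ClosedSub H) := by
        apply Subtype.ext
        exact aux_span_inf hy
      rwa [heq] at this
    · have := hinf _ hU𝔭 _ hV𝔭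
      have heq : line x ⊓ line (x + y) = (⊥ : ClosedSub H) := by
        apply Subtype.ext
        exact aux_span_inf hxy
      rwa [heq] at this
  exact hbot hbot'
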